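/- arXiv:2210.15538 — 4 statements merged into one kernel-verified Lean document; each statement's English description precedes it below -/
import Mathlib

section
/- For every integer m > 1 and every uniform attachment trajectory (G_n)_{n ≥ m+1} with degree cap d = 2m, and for every n ≥ m+1, the number of vertices of degree exactly d in G_n is at least n − m(m+1) and at most n − (m+1); equivalently, the number of open vertices of G_n is at least m+1 and at most m(m+1). -/
open Finset MeasureTheory Filter Topology
open scoped ENNReal

noncomputable section

open scoped Classical

/-- The degree of vertex `v` in the graph `g`, counting neighbors among `{1, …, n}`. -/
def degIn (g : SimpleGraph ℕ) (n v : ℕ) : ℕ :=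
  ((Finset.Icc 1 n).filter fun u => g.Adj v u).card

/-- The set of neighbors of vertex `v` in the graph `g` among `{1, …, n}`. -/
def nbrsIn (g : SimpleGraph ℕ) (n v : ℕ) : Finset ℕ :=
  (Finset.Icc 1 n).filter fun u => g.Adj v u

/-- `g'` is obtained from `g` (a graph on `{1,…,n}`) by one admissible uniform-attachment
step with parameter `m` and degree cap `d = 2m`: the new vertex `n+1` is joined to `m`
distinct vertices of `{1,…,n}`, each of degree `< 2m` in `g`; adjacencies among the other
vertices are unchanged, and all edges of `g'` stay inside `{1,…,n+1}`. -/
def IsUAStep (m n : ℕ) (g g' : SimpleGraph ℕ) : Prop :=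
  (∀ u v, g'.Adj u v → u ∈ Finset.Icc 1 (n+1) ∧ v ∈ Finset.Icc 1 (n+1)) ∧
  (∀ u v, u ≠ n+1 → v ≠ n+1 → (g'.Adj u v ↔ g.Adj u v)) ∧
  (nbrsIn g' (n+1) (n+1)).card = m ∧
  (∀ u, g'.Adj (n+1) u → u ∈ Finset.Icc 1 n ∧ degIn g n u < 2*m)

/-- The complete graph on the vertex set `{1, …, k}` (as a graph on `ℕ`). -/
def completeOn (k : ℕ) : SimpleGraph ℕ :=
  SimpleGraph.fromRel (fun u v => u ∈ Finset.Icc 1 k ∧ v ∈ Finset.Icc 1 k)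

/-- A uniform attachment trajectory with parameter `m` (degree cap `d = 2m`):
`G (m+1)` is the complete graph on `{1,…,m+1}`, and for each `n ≥ m+1` the graph `G (n+1)`
is obtained from `G n` by an admissible uniform attachment step.
(The values `G k` for `k ≤ m` are irrelevant.) -/
structure UATraj (m : ℕ) where
  G : ℕ → SimpleGraph ℕ
  init : G (m+1) = completeOn (m+1)
  step : ∀ n, m+1 ≤ n → IsUAStep m n (G n) (G (n+1))

/-- A uniform attachment trajectory with parameter `m`, defined up to time `N`. -/
structure UATrajUpTo (m N : ℕ) where
  G : ℕ → SimpleGraph ℕ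
  init : G (m+1) = completeOn (m+1)
  step : ∀ n, m+1 ≤ n → n+1 ≤ N → IsUAStep m n (G n) (G (n+1))


lemma completeOn_adj (k u v : ℕ) :
    (completeOn k).Adj u v ↔ u ≠ v ∧ u ∈ Finset.Icc 1 k ∧ v ∈ Finset.Icc 1 k := by
  simp only [completeOn, SimpleGraph.fromRel_adj]
  tauto

lemma degIn_completeOn (k v : ℕ) (hv : v ∈ Finset.Icc 1 k) :
    degIn (completeOn k) k v = k - 1 := by
  unfold degIn
  have h : (Finset.Icc 1 k).filter (fun u => (completeOn k).Adj v u) = (Finset.Icc 1 k).erase v := by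
    ext u
    simp only [Finset.mem_filter, completeOn_adj, Finset.mem_erase]
    constructor
    · rintro ⟨hu, hne, -, -⟩; exact ⟨fun h => hne h.symm, hu⟩
    · rintro ⟨hne, hu⟩; exact ⟨hu, fun h => hne h.symm, hv, hu⟩
  rw [h, Finset.card_erase_of_mem hv, Nat.card_Icc]
  omega

lemma uatraj_invariant (m : ℕ) (T : UATraj m) :
    ∀ n, m + 1 ≤ n →
      (∀ v ∈ Finset.Icc 1 n, m ≤ degIn (T.G n) n v ∧ degIn (T.G n) n v ≤ 2*m) ∧
      ((∑ v ∈ Finset.Icc 1 n, degIn (T.G n) n v) + m*(m+1) = 2*m*n) := by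
  intro n hn
  induction n, hn using Nat.le_induction with
  | base =>
    have hdeg : ∀ v ∈ Finset.Icc 1 (m+1), degIn (T.G (m+1)) (m+1) v = m := by
      intro v hv
      rw [T.init, degIn_completeOn (m+1) v hv]
      simp
    constructor
    · intro v hv
      rw [hdeg v hv]
      omega
    · rw [Finset.sum_congr rfl hdeg, Finset.sum_const, Nat.card_Icc, smul_eq_mul]
      have h : m + 1 + 1 - 1 = m + 1 := by omega
      rw [h]
      ring
  | succ n hn ih =>
    obtain ⟨hsub, hold, hcard, hnew⟩ := T.step n hn
    set g := T.G n with hg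
    set g' := T.G (n+1) with hg'
    have h1 : Finset.Icc 1 (n+1) = insert (n+1) (Finset.Icc 1 n) := by
      ext x
      simp only [Finset.mem_Icc, Finset.mem_insert]
      omega
    have hnotmem : (n+1) ∉ Finset.Icc 1 n := by simp
    have hdeg_new : degIn g' (n+1) (n+1) = m := hcard
    have hsplit : ∀ v ∈ Finset.Icc 1 n,
        degIn g' (n+1) v = degIn g n v + (if g'.Adj v (n+1) then 1 else 0) := by
      intro v hv
      have hvne : v ≠ n+1 := by
        simp only [Finset.mem_Icc] at hv; omega
      have hfe : (Finset.Icc 1 n).filter (fun u => g'.Adj v u)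
          = (Finset.Icc 1 n).filter (fun u => g.Adj v u) := by
        apply Finset.filter_congr
        intro u hu
        have hune : u ≠ n+1 := by
          simp only [Finset.mem_Icc] at hu; omega
        simp [hold v u hvne hune]
      unfold degIn
      rw [h1, Finset.filter_insert]
      by_cases hadj : g'.Adj v (n+1)
      · rw [if_pos hadj, if_pos hadj,
          Finset.card_insert_of_notMem (fun h => hnotmem (Finset.mem_of_mem_filter _ h)), hfe]
      · rw [if_neg hadj, if_neg hadj, hfe, add_zero]
    have hfilt : ((Finset.Icc 1 n).filter fun v => g'.Adj v (n+1)).card = m := by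
      have heq : (Finset.Icc 1 n).filter (fun v => g'.Adj v (n+1))
          = (Finset.Icc 1 (n+1)).filter (fun u => g'.Adj (n+1) u) := by
        ext u
        simp only [Finset.mem_filter, Finset.mem_Icc]
        constructor
        · rintro ⟨⟨hu1, hu2⟩, h3⟩
          exact ⟨⟨hu1, by omega⟩, h3.symm⟩
        · rintro ⟨-, h3⟩
          have := (hnew u h3).1
          simp only [Finset.mem_Icc] at this
          exact ⟨this, h3.symm⟩
      rw [heq]
      exact hcard
    constructor
    · intro v hv
      rw [h1, Finset.mem_insert] at hv
      rcases hv with rfl | hv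
      · rw [hdeg_new]; omega
      · rw [hsplit v hv]
        have hb := ih.1 v hv
        by_cases hadj : g'.Adj v (n+1)
        · have hlt := (hnew v hadj.symm).2
          rw [if_pos hadj]
          omega
        · rw [if_neg hadj]
          omega
    · rw [h1, Finset.sum_insert hnotmem, hdeg_new, Finset.sum_congr rfl hsplit,
        Finset.sum_add_distrib, ← Finset.card_filter, hfilt]
      have h2 : 2*m*(n+1) = 2*m*n + 2*m := by ring
      have := ih.2
      omega

/-- For every integer `m > 1`, every uniform attachment trajectory with degree
cap `d = 2m`, and every `n ≥ m+1`, the number of vertices of degree exactly `d = 2m` in `G n`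
is at least `n − m(m+1)` and at most `n − (m+1)`; equivalently, the number of open vertices
(vertices of degree `< 2m`) is at least `m+1` and at most `m(m+1)`. -/
theorem closed_vertex_count_uniform_attachment (m : ℕ) (hm : 1 < m) (T : UATraj m)
    (n : ℕ) (hn : m + 1 ≤ n) :
    (n - m*(m+1) ≤ ((Finset.Icc 1 n).filter fun v => degIn (T.G n) n v = 2*m).card ∧
      ((Finset.Icc 1 n).filter fun v => degIn (T.G n) n v = 2*m).card ≤ n - (m+1)) ∧
    (m + 1 ≤ ((Finset.Icc 1 n).filter fun v => degIn (T.G n) n v < 2*m).card ∧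
      ((Finset.Icc 1 n).filter fun v => degIn (T.G n) n v < 2*m).card ≤ m*(m+1))  := by
  obtain ⟨hdeg, hsum⟩ := uatraj_invariant m T n hn
  set g := T.G n with hg
  set S := Finset.Icc 1 n with hS
  set O := S.filter (fun v => degIn g n v < 2*m) with hO
  set C := S.filter (fun v => degIn g n v = 2*m) with hC
  have hcardS : S.card = n := by rw [hS, Nat.card_Icc]; omega
  have hOC : O.card + C.card = n := by
    have h := Finset.card_filter_add_card_filter_not
      (s := S) (p := fun v => degIn g n v < 2*m)
    have hCeq : S.filter (fun v => ¬ degIn g n v < 2*m) = C := by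
      apply Finset.filter_congr
      intro v hv
      have := (hdeg v hv).2
      simp only [not_lt]
      constructor
      · intro h'; omega
      · intro h'; omega
    rw [hCeq] at h
    rw [h, hcardS]
  have hD : ∑ v ∈ S, (2*m - degIn g n v) = m*(m+1) := by
    have hsum2 : ∑ v ∈ S, ((2*m - degIn g n v) + degIn g n v) = ∑ v ∈ S, 2*m := by
      apply Finset.sum_congr rfl
      intro v hv
      have := (hdeg v hv).2
      omega
    rw [Finset.sum_add_distrib, Finset.sum_const, hcardS, smul_eq_mul] at hsum2
    have h3 : n * (2*m) = 2*m*n := by ring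
    omega
  have hDO : ∑ v ∈ O, (2*m - degIn g n v) = m*(m+1) := by
    have hsplit := Finset.sum_filter_add_sum_filter_not S
      (fun v => degIn g n v < 2*m) (fun v => 2*m - degIn g n v)
    have hzero : ∑ v ∈ S.filter (fun v => ¬ degIn g n v < 2*m), (2*m - degIn g n v) = 0 := by
      apply Finset.sum_eq_zero
      intro v hv
      simp only [Finset.mem_filter, not_lt] at hv
      omega
    rw [hzero, add_zero] at hsplit
    rw [← hO] at hsplit
    rw [hsplit, hD]
  have hOle : O.card ≤ m*(m+1) := by
    have h : O.card • 1 ≤ ∑ v ∈ O, (2*m - degIn g n v) := by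
      apply Finset.card_nsmul_le_sum
      intro v hv
      simp only [hO, Finset.mem_filter] at hv
      omega
    rw [hDO, smul_eq_mul, mul_one] at h
    exact h
  have hOge : m + 1 ≤ O.card := by
    have hub : ∑ v ∈ O, (2*m - degIn g n v) ≤ O.card • m := by
      apply Finset.sum_le_card_nsmul
      intro v hv
      simp only [hO, Finset.mem_filter] at hv
      have := (hdeg v hv.1).1
      omega
    rw [smul_eq_mul, hDO] at hub
    have hmpos : 0 < m := by omega
    nlinarith
  have hB : m + 1 ≤ n := hn
  refine ⟨⟨?_, ?_⟩, hOge, hOle⟩ <;> omega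
end
end

section
/- For every integer m > 1 and every uniform attachment trajectory defined up to time n ≥ m+1 with degree cap d = 2m, there exists an admissible continuation of the trajectory by m+2 steps such that G_{n+m+2} is in a forest state over {1,…,n+1}: every vertex of {1,…,n+1} has degree d, and each of the m+1 vertices n+2, …, n+m+2 has degree m with all neighbors in {1,…,n+1}. In particular, the forest state can be reached from any state in both m+1 steps and m+2 steps. -/
open Finset MeasureTheory Filter Topology
open scoped ENNReal

noncomputable section

open scoped Classical

/-- `g` (a graph of a trajectory at time `N`) is in a forest state over `{1,…,k}`:
every vertex of `{1,…,k}` has degree `2m`, and each of the vertices `k+1,…,N` has degree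
`m` with all of its neighbors in `{1,…,k}`. -/
def ForestState (m k N : ℕ) (g : SimpleGraph ℕ) : Prop :=
  (∀ v ∈ Finset.Icc 1 k, degIn g N v = 2*m) ∧
  (∀ v ∈ Finset.Icc (k+1) N, degIn g N v = m ∧ nbrsIn g N v ⊆ Finset.Icc 1 k)


section ForestAux

lemma Icc_succ' (n : ℕ) : Finset.Icc 1 (n+1) = insert (n+1) (Finset.Icc 1 n) := by
  ext x; simp [Finset.mem_Icc]; omega

lemma degIn_succ' (g : SimpleGraph ℕ) (n v : ℕ) :
    degIn g (n+1) v = degIn g n v + (if g.Adj v (n+1) then 1 else 0) := by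
  unfold degIn
  rw [Icc_succ', Finset.filter_insert]
  split
  · rw [Finset.card_insert_of_notMem (by simp [Finset.mem_Icc])]
  · simp

lemma degIn_congr' {g g' : SimpleGraph ℕ} {n : ℕ} (v : ℕ)
    (h : ∀ u ∈ Finset.Icc 1 n, (g'.Adj v u ↔ g.Adj v u)) : degIn g' n v = degIn g n v := by
  unfold degIn
  congr 1
  exact Finset.filter_congr (by intro u hu; exact h u hu)

lemma sum_ite_card' (F : Finset ℕ) (p : ℕ → Prop) :
    F.sum (fun v => if p v then 1 else 0) = (F.filter p).card := by
  rw [Finset.card_eq_sum_ones, Finset.sum_filter]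

/-- the graph obtained by joining `n+1` to the vertices of `S`. -/
def attachG (g : SimpleGraph ℕ) (n : ℕ) (S : Finset ℕ) : SimpleGraph ℕ :=
  g ⊔ SimpleGraph.fromRel (fun u v => u = n+1 ∧ v ∈ S)

lemma attachG_adj (g : SimpleGraph ℕ) (n : ℕ) (S : Finset ℕ) (u v : ℕ) :
    (attachG g n S).Adj u v ↔ g.Adj u v ∨ (u ≠ v ∧ ((u = n+1 ∧ v ∈ S) ∨ (v = n+1 ∧ u ∈ S))) := by
  simp [attachG, SimpleGraph.fromRel_adj]

lemma step_facts (m n : ℕ) (g : SimpleGraph ℕ) (S : Finset ℕ)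
    (hS : S ⊆ Finset.Icc 1 n) (hScard : S.card = m)
    (hSopen : ∀ v ∈ S, degIn g n v < 2*m)
    (hedge : ∀ u v, g.Adj u v → u ∈ Finset.Icc 1 n ∧ v ∈ Finset.Icc 1 n) :
    IsUAStep m n g (attachG g n S) ∧
    (∀ u v, (attachG g n S).Adj u v → u ∈ Finset.Icc 1 (n+1) ∧ v ∈ Finset.Icc 1 (n+1)) ∧
    (∀ v ∈ Finset.Icc 1 n, degIn (attachG g n S) (n+1) v
        = degIn g n v + (if v ∈ S then 1 else 0)) ∧
    degIn (attachG g n S) (n+1) (n+1) = m ∧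
    nbrsIn (attachG g n S) (n+1) (n+1) = S ∧
    (∀ v ∈ Finset.Icc 1 n, v ∉ S → nbrsIn (attachG g n S) (n+1) v = nbrsIn g n v) := by
  set g' := attachG g n S with hg'
  have hnS : (n+1) ∉ S := fun h => by have := Finset.mem_Icc.1 (hS h); omega
  have hIccsub : Finset.Icc 1 n ⊆ Finset.Icc 1 (n+1) := Finset.Icc_subset_Icc_right (by omega)
  have hedge' : ∀ u v, g'.Adj u v → u ∈ Finset.Icc 1 (n+1) ∧ v ∈ Finset.Icc 1 (n+1) := by
    intro u v huv
    rw [attachG_adj] at huv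
    rcases huv with h | ⟨hne, ⟨rfl, hv⟩ | ⟨rfl, hu⟩⟩
    · exact ⟨hIccsub (hedge u v h).1, hIccsub (hedge u v h).2⟩
    · exact ⟨by simp [Finset.mem_Icc], hIccsub (hS hv)⟩
    · exact ⟨hIccsub (hS hu), by simp [Finset.mem_Icc]⟩
  have hpres : ∀ u v, u ≠ n+1 → v ≠ n+1 → (g'.Adj u v ↔ g.Adj u v) := by
    intro u v hu hv
    rw [attachG_adj]
    constructor
    · rintro (h | ⟨hne, ⟨rfl, _⟩ | ⟨rfl, _⟩⟩)
      · exact h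
      · exact absurd rfl hu
      · exact absurd rfl hv
    · exact Or.inl
  have hnotadjg : ∀ u, ¬ g.Adj (n+1) u := by
    intro u h
    have := Finset.mem_Icc.1 (hedge _ _ h).1; omega
  have hadj_new : ∀ u, g'.Adj (n+1) u ↔ u ∈ S := by
    intro u
    rw [attachG_adj]
    constructor
    · rintro (h | ⟨hne, ⟨h1, hv⟩ | ⟨rfl, hu⟩⟩)
      · exact absurd h (hnotadjg u)
      · exact hv
      · exact absurd hu hnS
    · intro hu
      have : u ≠ n+1 := fun h => hnS (h ▸ hu)
      exact Or.inr ⟨fun h => this h.symm, Or.inl ⟨rfl, hu⟩⟩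
  have hnbrs : nbrsIn g' (n+1) (n+1) = S := by
    unfold nbrsIn
    ext u
    simp only [Finset.mem_filter, hadj_new]
    exact ⟨fun h => h.2, fun h => ⟨hIccsub (hS h), h⟩⟩
  have hdegnew : degIn g' (n+1) (n+1) = m := by
    rw [show degIn g' (n+1) (n+1) = (nbrsIn g' (n+1) (n+1)).card from rfl, hnbrs, hScard]
  have hdeg_old : ∀ v ∈ Finset.Icc 1 n, degIn g' (n+1) v
      = degIn g n v + (if v ∈ S then 1 else 0) := by
    intro v hv
    have hvne : v ≠ n+1 := fun h => by have := Finset.mem_Icc.1 hv; omega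
    have h1 : degIn g' n v = degIn g n v := by
      apply degIn_congr'
      intro u hu
      exact hpres v u hvne (fun h => by have := Finset.mem_Icc.1 hu; omega)
    rw [degIn_succ', h1]
    congr 1
    have : g'.Adj v (n+1) ↔ v ∈ S := by rw [SimpleGraph.adj_comm]; exact hadj_new v
    rw [if_congr this rfl rfl]
  refine ⟨⟨hedge', hpres, by rw [hnbrs, hScard], ?_⟩, hedge', hdeg_old, hdegnew, hnbrs, ?_⟩
  · intro u hu
    rw [hadj_new] at hu
    exact ⟨hS hu, hSopen u hu⟩
  · intro v hv hvS
    unfold nbrsIn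
    have hvne : v ≠ n+1 := fun h => by have := Finset.mem_Icc.1 hv; omega
    rw [Icc_succ', Finset.filter_insert]
    have : ¬ g'.Adj v (n+1) := by
      rw [SimpleGraph.adj_comm, hadj_new]; exact hvS
    rw [if_neg this]
    apply Finset.filter_congr
    intro u hu
    exact hpres v u hvne (fun h => by have := Finset.mem_Icc.1 hu; omega)

lemma choose_S (m s : ℕ) (F : Finset ℕ) (c : ℕ → ℕ)
    (hsum : F.sum c = m * (s+1)) (hbd : ∀ v ∈ F, c v ≤ s+1) :
    ∃ S, S ⊆ F ∧ S.card = m ∧ (∀ v ∈ S, 0 < c v) ∧ (∀ v ∈ F, c v = s+1 → v ∈ S) := by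
  set A := F.filter (fun v => c v = s+1) with hA
  set B := F.filter (fun v => 0 < c v) with hB
  have hAB : A ⊆ B := by
    intro v hv
    rw [hA, Finset.mem_filter] at hv
    rw [hB, Finset.mem_filter]
    exact ⟨hv.1, by omega⟩
  have hAcard : A.card ≤ m := by
    have h1 : A.card * (s+1) = A.sum c := by
      rw [Finset.sum_congr rfl (fun v hv => (Finset.mem_filter.1 hv).2), Finset.sum_const,
        smul_eq_mul]
    have h2 : A.sum c ≤ F.sum c :=
      Finset.sum_le_sum_of_subset (Finset.filter_subset _ _)
    have := h1.trans_le (h2.trans_eq hsum)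
    by_contra h
    have : (m+1) * (s+1) ≤ A.card * (s+1) := Nat.mul_le_mul_right _ (by omega)
    nlinarith
  have hBcard : m ≤ B.card := by
    have h1 : F.sum c = B.sum c := by
      rw [hB]
      exact (Finset.sum_filter_of_ne (fun v hv h => by omega)).symm
    have h2 : B.sum c ≤ B.card * (s+1) := by
      calc B.sum c ≤ B.sum (fun _ => s+1) :=
            Finset.sum_le_sum (fun v hv => hbd v (Finset.mem_filter.1 hv).1)
        _ = B.card * (s+1) := by rw [Finset.sum_const, smul_eq_mul]
    have : m * (s+1) ≤ B.card * (s+1) := by omega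
    exact Nat.le_of_mul_le_mul_right this (by omega)
  obtain ⟨S, hAS, hSB, hScard⟩ := Finset.exists_subsuperset_card_eq hAB hAcard hBcard
  refine ⟨S, hSB.trans (Finset.filter_subset _ _), hScard, ?_, ?_⟩
  · intro v hv
    exact (Finset.mem_filter.1 (hSB hv)).2
  · intro v hv hc
    exact hAS (Finset.mem_filter.2 ⟨hv, hc⟩)


lemma sum_ind (F S : Finset ℕ) (h : S ⊆ F) :
    F.sum (fun v => if v ∈ S then 1 else 0) = S.card := by
  rw [Finset.sum_ite_mem, Finset.inter_eq_right.2 h, Finset.card_eq_sum_ones]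

lemma keyLemma (m : ℕ) (hm : 1 ≤ m) : ∀ (s n₀ n : ℕ) (g : SimpleGraph ℕ), n₀ ≤ n →
    (∀ u v, g.Adj u v → u ∈ Finset.Icc 1 n ∧ v ∈ Finset.Icc 1 n) →
    (∀ v ∈ Finset.Icc 1 n, degIn g n v ≤ 2*m) →
    (∀ v ∈ Finset.Icc (n₀+1) n, degIn g n v = m ∧ nbrsIn g n v ⊆ Finset.Icc 1 n₀) →
    ((Finset.Icc 1 n₀).sum (fun v => 2*m - degIn g n v) = m * s) →
    (∀ v ∈ Finset.Icc 1 n₀, 2*m - degIn g n v ≤ s) →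
    ∃ G : ℕ → SimpleGraph ℕ, (∀ k, k ≤ n → G k = g) ∧
      (∀ i, i < s → IsUAStep m (n+i) (G (n+i)) (G (n+i+1))) ∧
      ForestState m n₀ (n+s) (G (n+s)) := by
  intro s
  induction s with
  | zero =>
    intro n₀ n g hle hedge hub hopen hsum hbd
    refine ⟨fun _ => g, fun _ _ => rfl, fun i hi => absurd hi (by omega), ?_, ?_⟩
    · intro v hv
      have hv' : v ∈ Finset.Icc 1 n := by
        rw [Finset.mem_Icc] at hv ⊢; omega
      have h1 := hub v hv'
      have h2 := hbd v hv
      show degIn g (n+0) v = 2*m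
      simp only [Nat.add_zero]
      omega
    · intro v hv
      exact hopen v hv
  | succ s ih =>
    intro n₀ n g hle hedge hub hopen hsum hbd
    obtain ⟨S, hSsub0, hScard, hSpos, hSbig⟩ :=
      choose_S m s (Finset.Icc 1 n₀) (fun v => 2*m - degIn g n v) hsum hbd
    have hIccsub : Finset.Icc 1 n₀ ⊆ Finset.Icc 1 n := Finset.Icc_subset_Icc_right hle
    have hSsub : S ⊆ Finset.Icc 1 n := hSsub0.trans hIccsub
    have hSopen : ∀ v ∈ S, degIn g n v < 2*m := by
      intro v hv
      have := hSpos v hv; omega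
    set g' := attachG g n S with hg'def
    obtain ⟨hstep, hedge', hdeg_old, hdegnew, hnbrsnew, hnbrs_old⟩ :=
      step_facts m n g S hSsub hScard hSopen hedge
    have hub' : ∀ v ∈ Finset.Icc 1 (n+1), degIn g' (n+1) v ≤ 2*m := by
      intro v hv
      rcases eq_or_ne v (n+1) with rfl | hne
      · rw [hdegnew]; omega
      · have hv' : v ∈ Finset.Icc 1 n := by rw [Finset.mem_Icc] at hv ⊢; omega
        rw [hdeg_old v hv']
        by_cases hvS : v ∈ S
        · have := hSopen v hvS; simp [hvS]; omega
        · have := hub v hv'; simp [hvS]; omega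
    have hopen' : ∀ v ∈ Finset.Icc (n₀+1) (n+1),
        degIn g' (n+1) v = m ∧ nbrsIn g' (n+1) v ⊆ Finset.Icc 1 n₀ := by
      intro v hv
      rcases eq_or_ne v (n+1) with rfl | hne
      · exact ⟨hdegnew, hnbrsnew ▸ hSsub0⟩
      · have hv1 : v ∈ Finset.Icc 1 n := by
          rw [Finset.mem_Icc] at hv ⊢; omega
        have hv2 : v ∈ Finset.Icc (n₀+1) n := by
          rw [Finset.mem_Icc] at hv ⊢; omega
        have hvS : v ∉ S := by
          intro h
          have := Finset.mem_Icc.1 (hSsub0 h)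
          rw [Finset.mem_Icc] at hv2; omega
        refine ⟨?_, ?_⟩
        · rw [hdeg_old v hv1, if_neg hvS, (hopen v hv2).1]
          omega
        · rw [hnbrs_old v hv1 hvS]; exact (hopen v hv2).2
    have hpt : ∀ v ∈ Finset.Icc 1 n₀,
        (2*m - degIn g' (n+1) v) + (if v ∈ S then 1 else 0) = 2*m - degIn g n v := by
      intro v hv
      have hv' : v ∈ Finset.Icc 1 n := hIccsub hv
      rw [hdeg_old v hv']
      by_cases hvS : v ∈ S
      · have := hSopen v hvS; simp [hvS]; omega
      · simp [hvS]
    have hsum' : (Finset.Icc 1 n₀).sum (fun v => 2*m - degIn g' (n+1) v) = m * s := by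
      have h1 : (Finset.Icc 1 n₀).sum
          (fun v => (2*m - degIn g' (n+1) v) + (if v ∈ S then 1 else 0))
          = (Finset.Icc 1 n₀).sum (fun v => 2*m - degIn g n v) :=
        Finset.sum_congr rfl hpt
      rw [Finset.sum_add_distrib, sum_ind _ _ hSsub0, hScard, hsum] at h1
      have : m * (s+1) = m * s + m := by ring
      omega
    have hbd' : ∀ v ∈ Finset.Icc 1 n₀, 2*m - degIn g' (n+1) v ≤ s := by
      intro v hv
      have hv' : v ∈ Finset.Icc 1 n := hIccsub hv
      have h0 := hbd v hv
      rw [hdeg_old v hv']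
      by_cases hvS : v ∈ S
      · simp [hvS]; omega
      · simp [hvS]
        rcases Nat.lt_or_ge (2*m - degIn g n v) (s+1) with h | h
        · omega
        · exact absurd (hSbig v hv (by omega)) hvS
    obtain ⟨G', hG'pre, hG'step, hG'forest⟩ :=
      ih n₀ (n+1) g' (by omega) hedge' hub' hopen' hsum' hbd'
    refine ⟨fun k => if k ≤ n then g else G' k, ?_, ?_, ?_⟩
    · intro k hk; simp [hk]
    · intro i hi
      beta_reduce
      rcases Nat.eq_zero_or_pos i with rfl | hipos
      · have e1 : (if n + 0 ≤ n then g else G' (n+0)) = g := by simp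
        have e2 : (if n + 0 + 1 ≤ n then g else G' (n+0+1)) = g' := by
          rw [if_neg (by omega)]
          exact hG'pre (n+0+1) (by omega)
        rw [e1, e2]
        exact hstep
      · obtain ⟨j, rfl⟩ := Nat.exists_eq_add_of_le hipos
        have e1 : (if n + (1+j) ≤ n then g else G' (n+(1+j))) = G' ((n+1)+j) := by
          rw [if_neg (by omega)]; congr 1; omega
        have e2 : (if n + (1+j) + 1 ≤ n then g else G' (n+(1+j)+1)) = G' ((n+1)+j+1) := by
          rw [if_neg (by omega)]; congr 1; omega
        rw [show n + (1+j) = (n+1) + j by omega] at *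
        rw [e1, e2]
        exact hG'step j (by omega)
    · beta_reduce
      split
      · next h => exact absurd h (by omega)
      · next h =>
        have : n + (s+1) = (n+1) + s := by omega
        rw [this]
        exact hG'forest

lemma traj_inv (m N : ℕ) (hm : 1 ≤ m) (T : UATrajUpTo m N) :
    ∀ n, m+1 ≤ n → n ≤ N →
      (∀ u v, (T.G n).Adj u v → u ∈ Finset.Icc 1 n ∧ v ∈ Finset.Icc 1 n) ∧
      (∀ v ∈ Finset.Icc 1 n, m ≤ degIn (T.G n) n v ∧ degIn (T.G n) n v ≤ 2*m) ∧
      (Finset.Icc 1 n).sum (fun v => 2*m - degIn (T.G n) n v) = m*(m+1) := by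
  intro n hn
  induction n, hn using Nat.le_induction with
  | base =>
    intro _
    rw [T.init]
    have hdeg : ∀ v ∈ Finset.Icc 1 (m+1), degIn (completeOn (m+1)) (m+1) v = m := by
      intro v hv
      rw [degIn_completeOn (m+1) v hv]
      omega
    refine ⟨?_, ?_, ?_⟩
    · intro u v huv
      rw [completeOn_adj] at huv
      exact ⟨huv.2.1, huv.2.2⟩
    · intro v hv
      rw [hdeg v hv]
      omega
    · rw [Finset.sum_congr rfl (fun v hv => by rw [hdeg v hv])]
      rw [Finset.sum_const, Nat.card_Icc, smul_eq_mul,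
        show m+1+1-1 = m+1 by omega, show 2*m - m = m by omega, Nat.mul_comm]
  | succ n hn ih =>
    intro hN
    obtain ⟨hedge, hdeg, hsum⟩ := ih (by omega)
    obtain ⟨h1, h2, h3, h4⟩ := T.step n hn (by omega)
    set g := T.G n
    set g' := T.G (n+1)
    have hdegnew : degIn g' (n+1) (n+1) = m := h3
    have hdeg_old : ∀ v ∈ Finset.Icc 1 n,
        degIn g' (n+1) v = degIn g n v + (if g'.Adj v (n+1) then 1 else 0) := by
      intro v hv
      have hvne : v ≠ n+1 := fun h => by have := Finset.mem_Icc.1 hv; omega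
      rw [degIn_succ']
      congr 1
      exact degIn_congr' v (fun u hu =>
        h2 v u hvne (fun h => by have := Finset.mem_Icc.1 hu; omega))
    have hfilter : (Finset.Icc 1 n).filter (fun v => g'.Adj v (n+1))
        = nbrsIn g' (n+1) (n+1) := by
      unfold nbrsIn
      ext u
      simp only [Finset.mem_filter]
      constructor
      · rintro ⟨hu, hadj⟩
        have hu' : u ∈ Finset.Icc 1 (n+1) := by rw [Finset.mem_Icc] at hu ⊢; omega
        exact ⟨hu', hadj.symm⟩
      · rintro ⟨hu, hadj⟩
        exact ⟨(h4 u hadj).1, hadj.symm⟩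
    have hcount : (Finset.Icc 1 n).sum (fun v => if g'.Adj v (n+1) then 1 else 0) = m := by
      rw [sum_ite_card', hfilter, h3]
    have hlt : ∀ v ∈ Finset.Icc 1 n, g'.Adj v (n+1) → degIn g n v < 2*m := by
      intro v hv hadj
      exact (h4 v hadj.symm).2
    refine ⟨h1, ?_, ?_⟩
    · intro v hv
      rcases eq_or_ne v (n+1) with rfl | hne
      · rw [hdegnew]; omega
      · have hv' : v ∈ Finset.Icc 1 n := by rw [Finset.mem_Icc] at hv ⊢; omega
        rw [hdeg_old v hv']
        have := hdeg v hv'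
        by_cases hadj : g'.Adj v (n+1)
        · have := hlt v hv' hadj
          rw [if_pos hadj]; omega
        · rw [if_neg hadj]; omega
    · rw [Icc_succ', Finset.sum_insert (by simp [Finset.mem_Icc])]
      rw [hdegnew]
      have hpt : ∀ v ∈ Finset.Icc 1 n,
          (2*m - degIn g' (n+1) v) + (if g'.Adj v (n+1) then 1 else 0)
            = 2*m - degIn g n v := by
        intro v hv
        rw [hdeg_old v hv]
        by_cases hadj : g'.Adj v (n+1)
        · have := hlt v hv hadj
          simp only [if_pos hadj]; omega
        · simp only [if_neg hadj]; omega
      have h5 : (Finset.Icc 1 n).sum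
          (fun v => (2*m - degIn g' (n+1) v) + (if g'.Adj v (n+1) then 1 else 0))
          = m*(m+1) := by
        rw [Finset.sum_congr rfl hpt, hsum]
      rw [Finset.sum_add_distrib, hcount] at h5
      omega

end ForestAux

/-- For every integer `m > 1` and every uniform attachment trajectory defined
up to time `n ≥ m+1` with degree cap `d = 2m`, there is an admissible continuation by
`m+2` steps such that `G (n+m+2)` is in a forest state over `{1,…,n+1}`: every vertex of
`{1,…,n+1}` has degree `2m`, and each of the `m+1` vertices `n+2,…,n+m+2` has degree `m`
with all neighbors in `{1,…,n+1}`.  In particular, the forest state can be reached from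
any state in both `m+1` and `m+2` steps. -/
theorem uniform_attachment_forest_state_in_m_add_two_steps (m : ℕ) (hm : 1 < m)
    (n : ℕ) (hn : m + 1 ≤ n) (T : UATrajUpTo m n) :
    (∃ T' : UATrajUpTo m (n+m+2),
      (∀ k ≤ n, T'.G k = T.G k) ∧
      ForestState m (n+1) (n+m+2) (T'.G (n+m+2))) ∧
    (∃ T'' : UATrajUpTo m (n+m+1),
      (∀ k ≤ n, T''.G k = T.G k) ∧
      ForestState m n (n+m+1) (T''.G (n+m+1))) := by
  have hm1 : 1 ≤ m := by omega
  obtain ⟨hedge, hdeg, hsum⟩ := traj_inv m n hm1 T n hn le_rfl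
  constructor
  · -- m+2 steps: one attaching step, then the (m+1)-step scheme over {1,…,n+1}
    obtain ⟨S, hSsub, hScard, hSpos, -⟩ :=
      choose_S m m (Finset.Icc 1 n) (fun v => 2*m - degIn (T.G n) n v) hsum
        (fun v hv => by
          show 2*m - degIn (T.G n) n v ≤ m+1
          have := (hdeg v hv).1; omega)
    have hSopen : ∀ v ∈ S, degIn (T.G n) n v < 2*m := fun v hv => by
      have := hSpos v hv; omega
    obtain ⟨hstep0, hedge1, hdeg_old, hdegnew, hnbrsnew, hnbrs_old⟩ :=
      step_facts m n (T.G n) S hSsub hScard hSopen hedge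
    set g1 := attachG (T.G n) n S with hg1
    have hlb1 : ∀ v ∈ Finset.Icc 1 (n+1), m ≤ degIn g1 (n+1) v := by
      intro v hv
      rcases eq_or_ne v (n+1) with rfl | hne
      · rw [hdegnew]
      · have hv' : v ∈ Finset.Icc 1 n := by rw [Finset.mem_Icc] at hv ⊢; omega
        rw [hdeg_old v hv']
        have := (hdeg v hv').1
        by_cases hvS : v ∈ S <;> simp [hvS] <;> omega
    have hub1 : ∀ v ∈ Finset.Icc 1 (n+1), degIn g1 (n+1) v ≤ 2*m := by
      intro v hv
      rcases eq_or_ne v (n+1) with rfl | hne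
      · rw [hdegnew]; omega
      · have hv' : v ∈ Finset.Icc 1 n := by rw [Finset.mem_Icc] at hv ⊢; omega
        rw [hdeg_old v hv']
        by_cases hvS : v ∈ S
        · have := hSopen v hvS; simp [hvS]; omega
        · have := (hdeg v hv').2; simp [hvS]; omega
    have hopen1 : ∀ v ∈ Finset.Icc ((n+1)+1) (n+1),
        degIn g1 (n+1) v = m ∧ nbrsIn g1 (n+1) v ⊆ Finset.Icc 1 (n+1) := by
      intro v hv
      rw [Finset.mem_Icc] at hv; omega
    have hsum1 : (Finset.Icc 1 (n+1)).sum (fun v => 2*m - degIn g1 (n+1) v)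
        = m * (m+1) := by
      rw [Icc_succ', Finset.sum_insert (by simp [Finset.mem_Icc]), hdegnew]
      have hpt : ∀ v ∈ Finset.Icc 1 n,
          (2*m - degIn g1 (n+1) v) + (if v ∈ S then 1 else 0)
            = 2*m - degIn (T.G n) n v := by
        intro v hv
        rw [hdeg_old v hv]
        by_cases hvS : v ∈ S
        · have := hSopen v hvS; simp only [if_pos hvS]; omega
        · simp only [if_neg hvS]; omega
      have h5 : (Finset.Icc 1 n).sum
          (fun v => (2*m - degIn g1 (n+1) v) + (if v ∈ S then 1 else 0))
          = m*(m+1) := by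
        rw [Finset.sum_congr rfl hpt, hsum]
      rw [Finset.sum_add_distrib, sum_ind _ _ hSsub, hScard] at h5
      have hmm : m*(m+1) = m*m + m := by ring
      omega
    have hbd1 : ∀ v ∈ Finset.Icc 1 (n+1), 2*m - degIn g1 (n+1) v ≤ m+1 := by
      intro v hv
      have := hlb1 v hv; omega
    obtain ⟨G, hGpre, hGstep, hGforest⟩ :=
      keyLemma m hm1 (m+1) (n+1) (n+1) g1 le_rfl hedge1 hub1 hopen1 hsum1 hbd1
    refine ⟨⟨fun k => if k ≤ n then T.G k else G k, ?_, ?_⟩, ?_, ?_⟩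
    · beta_reduce
      rw [if_pos (by omega : m+1 ≤ n)]
      exact T.init
    · intro t ht htN
      beta_reduce
      by_cases h1 : t + 1 ≤ n
      · rw [if_pos (by omega : t ≤ n), if_pos h1]
        exact T.step t ht h1
      · by_cases h2 : t = n
        · subst h2
          rw [if_pos le_rfl, if_neg (by omega)]
          rw [hGpre (t+1) le_rfl]
          exact hstep0
        · have ht1 : n + 1 ≤ t := by omega
          have hti : (n+1) + (t - (n+1)) = t := by omega
          have hstept := hGstep (t - (n+1)) (by omega)
          rw [hti] at hstept
          rw [if_neg (by omega), if_neg (by omega)]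
          exact hstept
    · intro k hk
      show (if k ≤ n then T.G k else G k) = T.G k
      rw [if_pos hk]
    · show ForestState m (n+1) (n+m+2) (if n+m+2 ≤ n then T.G (n+m+2) else G (n+m+2))
      rw [if_neg (by omega : ¬ (n+m+2 ≤ n))]
      have hidx : (n+1) + (m+1) = n+m+2 := by omega
      rw [hidx] at hGforest
      exact hGforest
  · -- m+1 steps: the scheme directly over {1,…,n}
    have hopen0 : ∀ v ∈ Finset.Icc (n+1) n,
        degIn (T.G n) n v = m ∧ nbrsIn (T.G n) n v ⊆ Finset.Icc 1 n := by
      intro v hv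
      rw [Finset.mem_Icc] at hv; omega
    have hbd0 : ∀ v ∈ Finset.Icc 1 n, 2*m - degIn (T.G n) n v ≤ m+1 := by
      intro v hv
      have := (hdeg v hv).1; omega
    obtain ⟨G, hGpre, hGstep, hGforest⟩ :=
      keyLemma m hm1 (m+1) n n (T.G n) le_rfl hedge (fun v hv => (hdeg v hv).2)
        hopen0 hsum hbd0
    refine ⟨⟨fun k => if k ≤ n then T.G k else G k, ?_, ?_⟩, ?_, ?_⟩
    · beta_reduce
      rw [if_pos (by omega : m+1 ≤ n)]
      exact T.init
    · intro t ht htN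
      beta_reduce
      by_cases h1 : t + 1 ≤ n
      · rw [if_pos (by omega : t ≤ n), if_pos h1]
        exact T.step t ht h1
      · by_cases h2 : t = n
        · subst h2
          rw [if_pos le_rfl, if_neg (by omega)]
          have hstept := hGstep 0 (by omega)
          simp only [Nat.add_zero] at hstept
          rw [hGpre t le_rfl] at hstept
          exact hstept
        · have ht1 : n + 1 ≤ t := by omega
          have hti : n + (t - n) = t := by omega
          have hstept := hGstep (t - n) (by omega)
          rw [hti] at hstept
          rw [if_neg (by omega), if_neg (by omega)]
          exact hstept
    · intro k hk
      show (if k ≤ n then T.G k else G k) = T.G k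
      rw [if_pos hk]
    · show ForestState m n (n+m+1) (if n+m+1 ≤ n then T.G (n+m+1) else G (n+m+1))
      rw [if_neg (by omega : ¬ (n+m+1 ≤ n))]
      have hidx : n + (m+1) = n+m+1 := by omega
      rw [hidx] at hGforest
      exact hGforest
end
end

section
/- For every integer m > 1, every uniform attachment trajectory (G_n)_{n ≥ m+1} with degree cap d = 2m, every vertex v, every radius a ≥ 0 and every n with v ≤ n: if every vertex at graph distance at most a from v in G_n has degree d in G_n, then for every t ≥ n the set of vertices at graph distance at most a from v in G_t equals the set of vertices at graph distance at most a from v in G_n, and the subgraphs induced on this set by G_t and by G_n are equal. -/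
open Finset MeasureTheory Filter Topology
open scoped ENNReal

noncomputable section

open scoped Classical

/-- The ball of radius `a` around `v` in `g`: all vertices joined to `v` by a walk of
length at most `a` (i.e. at graph distance at most `a` from `v`). -/
def ballSet (g : SimpleGraph ℕ) (v a : ℕ) : Set ℕ := {u | ∃ p : g.Walk v u, p.length ≤ a}

lemma walk_transfer_src (g g' : SimpleGraph ℕ) (v a : ℕ)
    (hadj : ∀ u ∈ ballSet g v a, ∀ w, g.Adj u w → g'.Adj u w) :
    ∀ k, k ≤ a → ∀ u, ∀ p : g.Walk u v, p.length ≤ k → ∃ q : g'.Walk v u, q.length ≤ k := by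
  intro k
  induction k with
  | zero =>
    intro _ u p hp
    have := SimpleGraph.Walk.eq_of_length_eq_zero (Nat.le_zero.mp hp)
    subst this
    exact ⟨SimpleGraph.Walk.nil, by simp⟩
  | succ k ih =>
    intro hk u p hp
    cases p with
    | nil => exact ⟨SimpleGraph.Walk.nil, by simp⟩
    | cons h q =>
      rename_i x
      have hq : q.length ≤ k := by
        simp only [SimpleGraph.Walk.length_cons] at hp; omega
      obtain ⟨q', hq'⟩ := ih (by omega) x q hq
      have hx : x ∈ ballSet g v a :=
        ⟨q.reverse, by rw [SimpleGraph.Walk.length_reverse]; omega⟩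
      refine ⟨q'.concat (hadj x hx u h.symm), ?_⟩
      rw [SimpleGraph.Walk.length_concat]; omega

lemma walk_transfer_tgt (g g' : SimpleGraph ℕ) (v a : ℕ)
    (hadj : ∀ u ∈ ballSet g' v a, ∀ w, g.Adj u w → g'.Adj u w) :
    ∀ k, k ≤ a → ∀ u, ∀ p : g.Walk u v, p.length ≤ k → ∃ q : g'.Walk v u, q.length ≤ k := by
  intro k
  induction k with
  | zero =>
    intro _ u p hp
    have := SimpleGraph.Walk.eq_of_length_eq_zero (Nat.le_zero.mp hp)
    subst this
    exact ⟨SimpleGraph.Walk.nil, by simp⟩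
  | succ k ih =>
    intro hk u p hp
    cases p with
    | nil => exact ⟨SimpleGraph.Walk.nil, by simp⟩
    | cons h q =>
      rename_i x
      have hq : q.length ≤ k := by
        simp only [SimpleGraph.Walk.length_cons] at hp; omega
      obtain ⟨q', hq'⟩ := ih (by omega) x q hq
      have hx : x ∈ ballSet g' v a := ⟨q', by omega⟩
      refine ⟨q'.concat (hadj x hx u h.symm), ?_⟩
      rw [SimpleGraph.Walk.length_concat]; omega

lemma traj_supp (m : ℕ) (T : UATraj m) : ∀ k, m+1 ≤ k →
    ∀ u w, (T.G k).Adj u w → u ∈ Finset.Icc 1 k ∧ w ∈ Finset.Icc 1 k := by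
  intro k hk u w huw
  rcases Nat.lt_or_ge (m+1) k with h | h
  · obtain ⟨j, rfl⟩ : ∃ j, k = j+1 := ⟨k-1, by omega⟩
    exact (T.step j (by omega)).1 u w huw
  · have hkm : k = m+1 := le_antisymm h hk
    subst hkm
    rw [T.init] at huw
    rw [completeOn, SimpleGraph.fromRel_adj] at huw
    rcases huw.2 with ⟨h1, h2⟩ | ⟨h1, h2⟩ <;> exact ⟨by assumption, by assumption⟩

lemma step_freeze (m n v a : ℕ) (g g' : SimpleGraph ℕ)
    (hsupp : ∀ u w, g.Adj u w → u ∈ Finset.Icc 1 n ∧ w ∈ Finset.Icc 1 n)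
    (hstep : IsUAStep m n g g') (hv1 : 1 ≤ v) (hv : v ≤ n)
    (hcl : ∀ u ∈ ballSet g v a, degIn g n u = 2*m) :
    ballSet g' v a = ballSet g v a ∧
    (∀ u ∈ ballSet g v a, ∀ w, (g'.Adj u w ↔ g.Adj u w)) ∧
    (∀ u ∈ ballSet g v a, degIn g' (n+1) u = 2*m) := by
  have hmem : ∀ u ∈ ballSet g v a, u ∈ Finset.Icc 1 n := by
    intro u hu
    obtain ⟨p, _⟩ := hu
    by_cases hnil : p.Nil
    · have : p.length = 0 := SimpleGraph.Walk.nil_iff_length_eq.mp hnil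
      have := SimpleGraph.Walk.eq_of_length_eq_zero this
      subst this
      simp only [Finset.mem_Icc]; omega
    · have hnil' : ¬ p.reverse.Nil := by
        rw [SimpleGraph.Walk.nil_iff_length_eq, SimpleGraph.Walk.length_reverse]
        rw [SimpleGraph.Walk.nil_iff_length_eq] at hnil
        exact hnil
      obtain ⟨x, h, q, _⟩ := SimpleGraph.Walk.not_nil_iff.mp hnil'
      exact (hsupp u x h).1
  have hne : ∀ u ∈ ballSet g v a, u ≠ n+1 := by
    intro u hu
    have := hmem u hu
    simp only [Finset.mem_Icc] at this
    omega
  have hnadj : ∀ u ∈ ballSet g v a, ¬ g'.Adj (n+1) u := by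
    intro u hu hc
    have h1 := (hstep.2.2.2 u hc).2
    have h2 := hcl u hu
    omega
  have hadj : ∀ u ∈ ballSet g v a, ∀ w, (g'.Adj u w ↔ g.Adj u w) := by
    intro u hu w
    by_cases hw : w = n+1
    · subst hw
      constructor
      · intro h; exact absurd h.symm (hnadj u hu)
      · intro h
        have := (hsupp u _ h).2
        simp only [Finset.mem_Icc] at this; omega
    · exact hstep.2.1 u w (hne u hu) hw
  have hball : ballSet g' v a = ballSet g v a := by
    apply Set.Subset.antisymm
    · intro u ⟨p, hp⟩
      obtain ⟨q, hq⟩ := walk_transfer_tgt g' g v a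
        (fun x hx w h => (hadj x hx w).mp h) a le_rfl u p.reverse
        (by rw [SimpleGraph.Walk.length_reverse]; exact hp)
      exact ⟨q, hq⟩
    · intro u ⟨p, hp⟩
      obtain ⟨q, hq⟩ := walk_transfer_src g g' v a
        (fun x hx w h => (hadj x hx w).mpr h) a le_rfl u p.reverse
        (by rw [SimpleGraph.Walk.length_reverse]; exact hp)
      exact ⟨q, hq⟩
  refine ⟨hball, hadj, ?_⟩
  intro u hu
  have : (Finset.Icc 1 (n+1)).filter (fun w => g'.Adj u w)
      = (Finset.Icc 1 n).filter (fun w => g.Adj u w) := by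
    ext w
    simp only [Finset.mem_filter, Finset.mem_Icc]
    constructor
    · intro ⟨hw, hw2⟩
      have hgw : g.Adj u w := (hadj u hu w).mp hw2
      have := (hsupp u w hgw).2
      simp only [Finset.mem_Icc] at this
      exact ⟨this, hgw⟩
    · intro ⟨hw, hw2⟩
      exact ⟨⟨hw.1, by omega⟩, (hadj u hu w).mpr hw2⟩
  rw [degIn, this]
  exact hcl u hu

/-- For every integer `m > 1`, every uniform attachment trajectory with degree
cap `d = 2m`, every vertex `v`, every radius `a ≥ 0` and every `n ≥ v`: if every vertex at
distance at most `a` from `v` in `G n` has degree `2m` in `G n`, then for every `t ≥ n`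
the ball of radius `a` around `v` in `G t` equals the one in `G n`, and the subgraphs
induced on this set by `G t` and by `G n` coincide. -/
theorem uniform_attachment_complete_ball_frozen (m : ℕ) (hm : 1 < m) (T : UATraj m)
    (v a n : ℕ) (hv1 : 1 ≤ v) (hvn : v ≤ n) (hn : m + 1 ≤ n)
    (hcl : ∀ u ∈ ballSet (T.G n) v a, degIn (T.G n) n u = 2*m) :
    ∀ t, n ≤ t →
      ballSet (T.G t) v a = ballSet (T.G n) v a ∧
      ∀ u ∈ ballSet (T.G n) v a, ∀ w ∈ ballSet (T.G n) v a,
        ((T.G t).Adj u w ↔ (T.G n).Adj u w) := by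
  have key : ∀ t, n ≤ t →
      ballSet (T.G t) v a = ballSet (T.G n) v a ∧
      (∀ u ∈ ballSet (T.G n) v a, ∀ w ∈ ballSet (T.G n) v a,
        ((T.G t).Adj u w ↔ (T.G n).Adj u w)) ∧
      (∀ u ∈ ballSet (T.G n) v a, degIn (T.G t) t u = 2*m) := by
    intro t ht
    induction t, ht using Nat.le_induction with
    | base => exact ⟨rfl, fun u _ w _ => Iff.rfl, hcl⟩
    | succ t ht ih =>
      obtain ⟨hb, hA, hD⟩ := ih
      have hnt : m+1 ≤ t := le_trans hn ht
      obtain ⟨hb', hA', hD'⟩ := step_freeze m t v a (T.G t) (T.G (t+1))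
        (traj_supp m T t hnt) (T.step t hnt) hv1 (le_trans hvn ht)
        (by rw [hb]; exact hD)
      rw [hb] at hb' hA' hD'
      refine ⟨hb'.trans rfl, ?_, hD'⟩
      intro u hu w hw
      exact (hA' u hu w).trans (hA u hu w hw)
  intro t ht
  exact ⟨(key t ht).1, (key t ht).2.1⟩
end
end

section
/- For every integer m > 1, in the random uniform attachment graph process with degree cap d = 2m the conditional probability that a fixed open vertex receives a new edge in one step is at least 1/(m+1): for every n ≥ m+1, every graph G on {1,…,n}, and every vertex v of degree less than d in G, ℙ(G_n = G and v is adjacent to n+1 in G_{n+1}) ≥ ℙ(G_n = G)/(m+1). -/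
open Finset MeasureTheory Filter Topology FirstOrder
open scoped ENNReal

noncomputable section

open scoped Classical

/-- `N(g)`: the number of `m`-element sets of vertices of degree `< 2m` of a graph `g`
on `{1,…,n}`. -/
def numOpenSets (m n : ℕ) (g : SimpleGraph ℕ) : ℕ :=
  (((Finset.Icc 1 n).filter fun v => degIn g n v < 2*m).card).choose m

/-- The random uniform attachment graph process with parameter `m` (degree cap `d = 2m`),
modeled by random variables `G n` (for `n ≥ m+1`) on a probability space `(Ω, P)` taking
values in simple graphs on `{1,…,n}`: `G (m+1)` is a.s. the complete graph on `{1,…,m+1}`;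
a.s. each `G (n+1)` is obtained from `G n` by an admissible uniform attachment step; and
for every graph `g` on `{1,…,n}` and every `m`-element set `S` of vertices of degree `< 2m`
of `g`, `P(G n = g and the neighborhood of n+1 in G (n+1) equals S) = P(G n = g) / N(g)`. -/
structure UAProcess (m : ℕ) {Ω : Type} [MeasurableSpace Ω] (P : Measure Ω) where
  G : ℕ → Ω → SimpleGraph ℕ
  meas : ∀ n H, MeasurableSet {ω | G n ω = H}
  init : P {ω | G (m+1) ω = completeOn (m+1)} = 1
  stepAdm : ∀ n, m+1 ≤ n → P {ω | IsUAStep m n (G n ω) (G (n+1) ω)} = 1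
  stepUnif : ∀ n, m+1 ≤ n → ∀ g : SimpleGraph ℕ,
    (∀ u v, g.Adj u v → u ∈ Finset.Icc 1 n ∧ v ∈ Finset.Icc 1 n) →
    ∀ S : Finset ℕ, S.card = m →
    (∀ v ∈ S, v ∈ Finset.Icc 1 n ∧ degIn g n v < 2*m) →
    P {ω | G n ω = g ∧ nbrsIn (G (n+1) ω) (n+1) (n+1) = S} =
      P {ω | G n ω = g} / (numOpenSets m n g : ℝ≥0∞)

/-!
Two invariants hold almost surely along the process: all degrees are at most `2m`, and the
total deficit `∑ (2m - deg)` equals `m(m+1)` (the initial clique has deficit `m` at each of its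
`m+1` vertices, and each step adds a vertex of deficit `m` while taking one unit from each of
its `m` neighbours). Hence there are `k ≤ m(m+1)` open vertices, and `k ≥ m` as long as a step
is possible. Each of the `C(k, m)` admissible neighbourhoods has probability `P(G n = g) / C(k, m)`;
those avoiding `v` have total mass `C(k-1, m) / C(k, m) · P(G n = g)`, so `v` is hit with
probability at least `C(k-1, m-1) / C(k, m) = m / k ≥ 1 / (m+1)` times `P(G n = g)`.
-/

theorem Nat.choose_le_mul_choose_pred {k m c : ℕ} (hm : 0 < m) (hk : k ≤ m * c) :
    k.choose m ≤ c * (k - 1).choose (m - 1) := by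
  obtain ⟨m, rfl⟩ := Nat.exists_eq_add_of_lt hm
  rcases k with _ | k
  · simp
  have hrec := Nat.add_one_mul_choose_eq k m
  simp only [zero_add, Nat.add_sub_cancel] at hk hrec ⊢
  refine Nat.le_of_mul_le_mul_left ?_ (Nat.succ_pos m)
  calc (m + 1) * (k + 1).choose (m + 1) = (k + 1) * k.choose m := by rw [hrec, mul_comm]
    _ ≤ ((m + 1) * c) * k.choose m := Nat.mul_le_mul_right _ hk
    _ = (m + 1) * (c * k.choose m) := by ring

theorem Finset.card_filter_lt_le_sum_tsub {ι : Type*} (s : Finset ι) (f : ι → ℕ) (c : ℕ) :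
    #{u ∈ s | f u < c} ≤ ∑ u ∈ s, (c - f u) :=
  calc #{u ∈ s | f u < c} = ∑ u ∈ s with f u < c, 1 := card_eq_sum_ones _
    _ ≤ ∑ u ∈ s with f u < c, (c - f u) :=
        sum_le_sum fun u hu => by have := (mem_filter.mp hu).2; omega
    _ ≤ ∑ u ∈ s, (c - f u) := sum_le_sum_of_subset (filter_subset _ _)

theorem ENNReal.div_le_of_le_add_mul_div {a t : ℝ≥0∞} {c c₁ c₂ d : ℕ} (ha : a ≠ ⊤)
    (hc : c = c₁ + c₂) (hcd : c ≤ d * c₁) (hc0 : c ≠ 0) (h : a ≤ t + c₂ * (a / c)) :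
    a / d ≤ t := by
  set q := a / c
  have hq : q ≠ ⊤ := ENNReal.div_ne_top ha (by exact_mod_cast hc0)
  have ha_eq : a = c * q := (ENNReal.mul_div_cancel (by exact_mod_cast hc0) (by simp)).symm
  have hc₁ : (c₁ : ℝ≥0∞) * q ≤ t := by
    refine (ENNReal.add_le_add_iff_right (ENNReal.mul_ne_top (ENNReal.natCast_ne_top c₂) hq)).mp ?_
    calc (c₁ : ℝ≥0∞) * q + c₂ * q = a := by rw [ha_eq, hc]; push_cast; ring
      _ ≤ t + c₂ * q := h
  refine ENNReal.div_le_of_le_mul ?_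
  calc a = c * q := ha_eq
    _ ≤ ((d * c₁ : ℕ) : ℝ≥0∞) * q := mul_le_mul_left (by exact_mod_cast hcd) q
    _ = c₁ * q * d := by push_cast; ring
    _ ≤ t * d := mul_le_mul_left hc₁ _

theorem MeasureTheory.measure_inter_eq_of_measure_eq_one {Ω : Type*} [MeasurableSpace Ω]
    {P : Measure Ω} [IsProbabilityMeasure P] {B X : Set Ω} (hB : MeasurableSet B)
    (hX : P X = 1) : P (X ∩ B) = P B := by
  simpa using Measure.measure_inter_eq_of_measure_eq hB (hX.trans measure_univ.symm)
    (Set.subset_univ X) (by simp [hX])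

theorem MeasureTheory.nonempty_inter_of_measure_eq_one {Ω : Type*} [MeasurableSpace Ω]
    {P : Measure Ω} [IsProbabilityMeasure P] {B X : Set Ω} (hB : MeasurableSet B)
    (hX : P X = 1) (hB0 : P B ≠ 0) : (X ∩ B).Nonempty :=
  nonempty_of_measure_ne_zero ((measure_inter_eq_of_measure_eq_one hB hX).trans_ne hB0)

def SupportedOn (n : ℕ) (g : SimpleGraph ℕ) : Prop :=
  ∀ u v, g.Adj u v → u ∈ Finset.Icc 1 n ∧ v ∈ Finset.Icc 1 n

theorem finite_setOf_supportedOn (n : ℕ) : {g | SupportedOn n g}.Finite := by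
  refine Set.Finite.of_finite_image (f := fun g => {p : ℕ × ℕ | g.Adj p.1 p.2}) ?_ ?_
  · refine ((Set.finite_Icc 1 n).prod (Set.finite_Icc 1 n)).finite_subsets.subset ?_
    rintro _ ⟨g, hg, rfl⟩ p hp
    have := hg p.1 p.2 hp
    simp only [Finset.mem_Icc] at this
    exact this
  · intro g _ h _ hgh
    ext u v
    exact Set.ext_iff.mp hgh (u, v)

def openVerts (m n : ℕ) (g : SimpleGraph ℕ) : Finset ℕ :=
  (Finset.Icc 1 n).filter fun v => degIn g n v < 2*m

theorem degIn_add_one (g : SimpleGraph ℕ) (n u : ℕ) :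
    degIn g (n + 1) u = degIn g n u + if g.Adj u (n + 1) then 1 else 0 := by
  simp only [degIn, card_filter]
  exact sum_Icc_succ_top (by omega) _

structure UAInvariant (m n : ℕ) (g : SimpleGraph ℕ) : Prop where
  supportedOn : SupportedOn n g
  degIn_le : ∀ u ∈ Finset.Icc 1 n, degIn g n u ≤ 2*m
  sum_degIn : ∑ u ∈ Finset.Icc 1 n, degIn g n u + m*(m+1) = 2*m*n

theorem uaInvariant_completeOn (m : ℕ) : UAInvariant m (m+1) (completeOn (m+1)) := by
  have hdeg : ∀ u ∈ Finset.Icc 1 (m+1), degIn (completeOn (m+1)) (m+1) u = m := by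
    intro u hu
    have : (Finset.Icc 1 (m+1)).filter (fun w => (completeOn (m+1)).Adj u w)
        = (Finset.Icc 1 (m+1)).erase u := by
      ext w
      simp only [completeOn, SimpleGraph.fromRel_adj, mem_filter, mem_erase]
      grind
    rw [degIn, this, card_erase_of_mem hu, Nat.card_Icc]
    omega
  refine ⟨fun u w h => ?_, fun u hu => by rw [hdeg u hu]; omega, ?_⟩
  · simp only [completeOn, SimpleGraph.fromRel_adj] at h
    exact h.2.elim id And.symm
  · rw [sum_congr rfl hdeg, sum_const, Nat.card_Icc, smul_eq_mul, Nat.add_sub_cancel]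
    ring

theorem UAInvariant.card_openVerts_le {m n : ℕ} {g : SimpleGraph ℕ} (h : UAInvariant m n g) :
    #(openVerts m n g) ≤ m*(m+1) := by
  refine (card_filter_lt_le_sum_tsub _ _ _).trans (le_of_eq ?_)
  have hsum : ∑ u ∈ Finset.Icc 1 n, (2*m - degIn g n u) + ∑ u ∈ Finset.Icc 1 n, degIn g n u
      = 2*m*n := by
    rw [← sum_add_distrib, sum_congr rfl fun u hu => Nat.sub_add_cancel (h.degIn_le u hu),
      sum_const, Nat.card_Icc, smul_eq_mul, Nat.add_sub_cancel, mul_comm]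
  have := h.sum_degIn
  omega

namespace IsUAStep

variable {m n : ℕ} {g g' : SimpleGraph ℕ}

theorem nbrsIn_eq (h : IsUAStep m n g g') :
    nbrsIn g' (n+1) (n+1) = (Finset.Icc 1 n).filter (fun u => g'.Adj (n+1) u) := by
  ext u
  simp only [nbrsIn, mem_filter]
  constructor
  · intro ⟨_, hu⟩; exact ⟨(h.2.2.2 u hu).1, hu⟩
  · intro ⟨hu, hadj⟩; exact ⟨by simp only [mem_Icc] at hu ⊢; omega, hadj⟩

theorem nbrsIn_mem_powersetCard (h : IsUAStep m n g g') :
    nbrsIn g' (n+1) (n+1) ∈ (openVerts m n g).powersetCard m := by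
  refine mem_powersetCard.mpr ⟨fun u hu => ?_, h.2.2.1⟩
  rw [h.nbrsIn_eq, mem_filter] at hu
  exact mem_filter.mpr (h.2.2.2 u hu.2)

theorem le_card_openVerts (h : IsUAStep m n g g') : m ≤ #(openVerts m n g) := by
  simpa [h.2.2.1] using card_le_card (mem_powersetCard.mp h.nbrsIn_mem_powersetCard).1

theorem degIn_eq {u : ℕ} (h : IsUAStep m n g g') (hu : u ∈ Finset.Icc 1 n) :
    degIn g' (n+1) u = degIn g n u + if g'.Adj u (n+1) then 1 else 0 := by
  rw [degIn_add_one, degIn, degIn, filter_congr fun w hw => h.2.1 u w ?_ ?_]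
  all_goals simp only [mem_Icc] at hu hw; omega

theorem uaInvariant (h : IsUAStep m n g g') (hg : UAInvariant m n g) :
    UAInvariant m (n+1) g' := by
  have hnew : degIn g' (n+1) (n+1) = m := h.2.2.1
  have hadj : #{u ∈ Finset.Icc 1 n | g'.Adj u (n+1)} = m := by
    simp_rw [SimpleGraph.adj_comm _ _ (n+1), ← h.nbrsIn_eq]
    exact h.2.2.1
  refine ⟨h.1, fun u hu => ?_, ?_⟩
  · rcases eq_or_ne u (n+1) with rfl | hne
    · omega
    have hu' : u ∈ Finset.Icc 1 n := by simp only [mem_Icc] at hu ⊢; omega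
    rw [h.degIn_eq hu']
    split_ifs with hun
    · have := (h.2.2.2 u hun.symm).2; omega
    · have := hg.degIn_le u hu'; omega
  · rw [sum_Icc_succ_top (by omega), hnew, sum_congr rfl fun u => h.degIn_eq, sum_add_distrib,
      ← card_filter, hadj]
    linarith [hg.sum_degIn]

end IsUAStep

section UAProcess

variable {Ω : Type} [MeasurableSpace Ω] {P : Measure Ω} {m : ℕ}

theorem UAProcess.measurableSet_setOf (X : UAProcess m P) {n : ℕ} {Q : SimpleGraph ℕ → Prop}
    (hQ : ∀ g, Q g → SupportedOn n g) : MeasurableSet {ω | Q (X.G n ω)} := by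
  have : {ω | Q (X.G n ω)} = ⋃ g ∈ {g | Q g}, {ω | X.G n ω = g} := by ext; simp
  rw [this]
  exact ((finite_setOf_supportedOn n).subset hQ).measurableSet_biUnion fun g _ => X.meas n g

variable [IsProbabilityMeasure P]

theorem UAProcess.measure_uaInvariant (X : UAProcess m P) {n : ℕ} (hn : m+1 ≤ n) :
    P {ω | UAInvariant m n (X.G n ω)} = 1 := by
  induction n, hn using Nat.le_induction with
  | base =>
    refine le_antisymm prob_le_one (X.init ▸ measure_mono fun ω (hω : _ = _) => ?_)
    change UAInvariant m (m+1) (X.G (m+1) ω)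
    exact hω ▸ uaInvariant_completeOn m
  | succ n hn ih =>
    refine le_antisymm prob_le_one ?_
    rw [← ih, ← measure_inter_eq_of_measure_eq_one
      (X.measurableSet_setOf fun _ h => h.supportedOn) (X.stepAdm n hn)]
    exact measure_mono fun ω ⟨hstep, hinv⟩ => hstep.uaInvariant hinv

theorem UAProcess.uaInvariant_of_measure_ne_zero (X : UAProcess m P) {n : ℕ} (hn : m+1 ≤ n)
    {g : SimpleGraph ℕ} (hg0 : P {ω | X.G n ω = g} ≠ 0) : UAInvariant m n g := by
  obtain ⟨ω, hinv, hω : X.G n ω = g⟩ :=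
    nonempty_inter_of_measure_eq_one (X.meas n g) (X.measure_uaInvariant hn) hg0
  exact hω ▸ hinv

theorem UAProcess.le_card_openVerts_of_measure_ne_zero (X : UAProcess m P) {n : ℕ}
    (hn : m+1 ≤ n) {g : SimpleGraph ℕ} (hg0 : P {ω | X.G n ω = g} ≠ 0) :
    m ≤ #(openVerts m n g) := by
  obtain ⟨ω, hstep : IsUAStep m n _ _, hω : X.G n ω = g⟩ :=
    nonempty_inter_of_measure_eq_one (X.meas n g) (X.stepAdm n hn) hg0
  exact hω ▸ hstep.le_card_openVerts

theorem UAProcess.measure_le_adj_add (X : UAProcess m P) {n : ℕ} (hn : m+1 ≤ n)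
    {g : SimpleGraph ℕ} (hg : SupportedOn n g) {v : ℕ} (hv : v ∈ openVerts m n g) :
    P {ω | X.G n ω = g} ≤ P {ω | X.G n ω = g ∧ (X.G (n+1) ω).Adj (n+1) v} +
      ((#(openVerts m n g) - 1).choose m : ℕ) *
        (P {ω | X.G n ω = g} / (numOpenSets m n g : ℝ≥0∞)) := by
  set E := fun S : Finset ℕ => {ω | X.G n ω = g ∧ nbrsIn (X.G (n+1) ω) (n+1) (n+1) = S}
  have hE : ∀ S ∈ ((openVerts m n g).erase v).powersetCard m,
      P (E S) = P {ω | X.G n ω = g} / (numOpenSets m n g : ℝ≥0∞) := by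
    intro S hS
    obtain ⟨hSsub, hScard⟩ := mem_powersetCard.mp hS
    exact X.stepUnif n hn g hg S hScard fun u hu => mem_filter.mp (mem_of_mem_erase (hSsub hu))
  have hcover : {ω | IsUAStep m n (X.G n ω) (X.G (n+1) ω)} ∩ {ω | X.G n ω = g} ⊆
      {ω | X.G n ω = g ∧ (X.G (n+1) ω).Adj (n+1) v} ∪
        ⋃ S ∈ ((openVerts m n g).erase v).powersetCard m, E S := by
    rintro ω ⟨hstep : IsUAStep m n _ _, hωg : X.G n ω = g⟩
    rw [hωg] at hstep
    by_cases hadj : (X.G (n+1) ω).Adj (n+1) v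
    · exact Or.inl ⟨hωg, hadj⟩
    refine Or.inr (Set.mem_biUnion ?_ (show ω ∈ E _ from ⟨hωg, rfl⟩))
    obtain ⟨hsub, hcard⟩ := mem_powersetCard.mp hstep.nbrsIn_mem_powersetCard
    refine mem_powersetCard.mpr ⟨fun u hu => mem_erase.mpr ⟨?_, hsub hu⟩, hcard⟩
    rintro rfl
    exact hadj (mem_filter.mp hu).2
  calc P {ω | X.G n ω = g}
      = P ({ω | IsUAStep m n (X.G n ω) (X.G (n+1) ω)} ∩ {ω | X.G n ω = g}) :=
        (measure_inter_eq_of_measure_eq_one (X.meas n g) (X.stepAdm n hn)).symm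
    _ ≤ P {ω | X.G n ω = g ∧ (X.G (n+1) ω).Adj (n+1) v} +
          ∑ S ∈ ((openVerts m n g).erase v).powersetCard m, P (E S) :=
        (measure_mono hcover).trans ((measure_union_le _ _).trans
          (add_le_add_right (measure_biUnion_finset_le _ _) _))
    _ = _ := by
        rw [sum_congr rfl hE, sum_const, card_powersetCard, card_erase_of_mem hv, nsmul_eq_mul]

end UAProcess

theorem uniform_attachment_open_vertex_hit_probability_general
    {Ω : Type} [MeasurableSpace Ω] (P : Measure Ω) [IsProbabilityMeasure P]
    (m : ℕ) (X : UAProcess m P) (n : ℕ) (hn : m + 1 ≤ n)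
    (g : SimpleGraph ℕ) (hg : ∀ u v, g.Adj u v → u ∈ Finset.Icc 1 n ∧ v ∈ Finset.Icc 1 n)
    (v : ℕ) (hv : v ∈ Finset.Icc 1 n) (hdeg : degIn g n v < 2*m) :
    P {ω | X.G n ω = g ∧ (X.G (n+1) ω).Adj (n+1) v} ≥
      P {ω | X.G n ω = g} / ((m : ℝ≥0∞) + 1) := by
  rcases eq_or_ne (P {ω | X.G n ω = g}) 0 with hA | hA
  · simp [hA]
  have hv_open : v ∈ openVerts m n g := mem_filter.mpr ⟨hv, hdeg⟩
  have hm : 0 < m := by omega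
  have hk : 0 < #(openVerts m n g) := card_pos.mpr ⟨v, hv_open⟩
  have hcd : numOpenSets m n g ≤ (m + 1) * (#(openVerts m n g) - 1).choose (m - 1) :=
    Nat.choose_le_mul_choose_pred hm (X.uaInvariant_of_measure_ne_zero hn hA).card_openVerts_le
  have hc0 : numOpenSets m n g ≠ 0 :=
    (Nat.choose_pos (X.le_card_openVerts_of_measure_ne_zero hn hA)).ne'
  simpa using ENNReal.div_le_of_le_add_mul_div (measure_ne_top _ _)
    (Nat.choose_eq_choose_pred_add hk hm) hcd hc0 (X.measure_le_adj_add hn hg hv_open)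

/-- In the random uniform attachment graph process with degree cap `d = 2m`,
the conditional probability that a fixed open vertex receives a new edge in one step is at
least `1/(m+1)`: for every `n ≥ m+1`, every graph `g` on `{1,…,n}`, and every vertex `v`
of degree `< 2m` in `g`,
`P(G n = g and v adjacent to n+1 in G (n+1)) ≥ P(G n = g) / (m+1)`. -/
theorem uniform_attachment_open_vertex_hit_probability
    {Ω : Type} [MeasurableSpace Ω] (P : Measure Ω) [IsProbabilityMeasure P]
    (m : ℕ) (hm : 1 < m) (X : UAProcess m P) (n : ℕ) (hn : m + 1 ≤ n)
    (g : SimpleGraph ℕ) (hg : ∀ u v, g.Adj u v → u ∈ Finset.Icc 1 n ∧ v ∈ Finset.Icc 1 n)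
    (v : ℕ) (hv : v ∈ Finset.Icc 1 n) (hdeg : degIn g n v < 2*m) :
    P {ω | X.G n ω = g ∧ (X.G (n+1) ω).Adj (n+1) v} ≥
      P {ω | X.G n ω = g} / ((m : ℝ≥0∞) + 1) :=
  uniform_attachment_open_vertex_hit_probability_general P m X n hn g hg v hv hdeg
end
end
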